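/- arXiv:1510.05071 — 2 statements merged into one kernel-verified Lean document; each statement's English description precedes it below -/
import Mathlib

section
/- Let a, b ∈ ℝ≥0 satisfy a ≤ max{c, γ(b)} and b ≤ max{d, γ'(a)}, where γ, γ' are class-K functions such that γ ∘ γ' is a contraction (γ(γ'(s)) < s for all s > 0). Then a ≤ max{c, γ(d)} and b ≤ max{d, γ'(c)}. -/
/-!
If `a` exceeded `max c (γ d)`, then `a ≤ γ b ≤ max (γ d) (γ (γ' a))` would force `a ≤ γ (γ' a)`,
against the contraction. The bound on `b` is the same argument with the subsystems swapped, since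
`γ' ∘ γ` is a contraction as soon as `γ ∘ γ'` is and `γ` is strictly increasing.
-/

open NNReal

section SmallGain

variable {α β : Type*} [LinearOrder α] [OrderBot α] [LinearOrder β]

theorem StrictMono.comp_lt_self_symm [OrderBot β] {f : β → α} {g : α → β} (hf : StrictMono f)
    (hcontr : ∀ s, ⊥ < s → f (g s) < s) (t : β) (ht : ⊥ < t) : g (f t) < t :=
  hf.lt_iff_lt.mp <| hcontr (f t) <| bot_le.trans_lt <| hf ht

theorem le_max_of_small_gain {f : β → α} {g : α → β} {a c : α} {b d : β} (hf : Monotone f)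
    (hcontr : ∀ s, ⊥ < s → f (g s) < s) (ha : a ≤ max c (f b)) (hb : b ≤ max d (g a)) :
    a ≤ max c (f d) := by
  by_contra! h
  obtain ⟨hca, hfda⟩ := max_lt_iff.mp h
  have hafga : a ≤ f (g a) := by
    have : a ≤ max (f d) (f (g a)) := calc
      a ≤ f b := (le_max_iff.mp ha).resolve_left hca.not_ge
      _ ≤ f (max d (g a)) := hf hb
      _ = max (f d) (f (g a)) := hf.map_max
    exact (le_max_iff.mp this).resolve_left hfda.not_ge
  exact (hcontr a (bot_le.trans_lt hca)).not_ge hafga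

end SmallGain

theorem small_gain_two_general (a b c d : ℝ≥0) (γ γ' : ℝ≥0 → ℝ≥0)
    (hγmono : StrictMono γ)
    (hγ'mono : StrictMono γ')
    (hcontr : ∀ s : ℝ≥0, 0 < s → γ (γ' s) < s)
    (ha : a ≤ max c (γ b)) (hb : b ≤ max d (γ' a)) :
    a ≤ max c (γ d) ∧ b ≤ max d (γ' c) := by
  have hcontr_bot : ∀ s, ⊥ < s → γ (γ' s) < s := by simpa only [bot_eq_zero'] using hcontr
  exact ⟨le_max_of_small_gain hγmono.monotone hcontr_bot ha hb,
    le_max_of_small_gain hγ'mono.monotone (hγmono.comp_lt_self_symm hcontr_bot) hb ha⟩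

/-- Small-gain argument for two interconnected subsystems: if
`a ≤ max{c, γ(b)}` and `b ≤ max{d, γ'(a)}` with `γ, γ'` class-K functions whose
composition is a contraction, then `a ≤ max{c, γ(d)}` and `b ≤ max{d, γ'(c)}`. -/
theorem small_gain_two (a b c d : ℝ≥0) (γ γ' : ℝ≥0 → ℝ≥0)
    (hγcont : Continuous γ) (hγmono : StrictMono γ) (hγzero : γ 0 = 0)
    (hγ'cont : Continuous γ') (hγ'mono : StrictMono γ') (hγ'zero : γ' 0 = 0)
    (hcontr : ∀ s : ℝ≥0, 0 < s → γ (γ' s) < s)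
    (ha : a ≤ max c (γ b)) (hb : b ≤ max d (γ' a)) :
    a ≤ max c (γ d) ∧ b ≤ max d (γ' c) :=
  small_gain_two_general a b c d γ γ' hγmono hγ'mono hcontr ha hb
end

section
/- Let ψ ≠ 0 be a real scalar, J : [t₀,∞) → ℝ^m continuous, γ > 0 and B > 0 constants. Consider the componentwise dynamics ṫ_l(t) = ψ( j_l(t) − (‖J(t)‖ + γ)·sgn_α(ψ t_l(t)) ) where sgn_α(s) equals 1 if s ≥ α, −1 if s ≤ −α, and 0 if |s| < α, with α = B. If |ψ t_l(t₀)| ≤ B for all l, then |ψ t_l(t)| ≤ B for all t ≥ t₀ and all l. -/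
/-- The saturated sign function: `1` if `s ≥ α`, `-1` if `s ≤ -α`, `0` otherwise. -/
noncomputable def sgnα (α s : ℝ) : ℝ :=
  if α ≤ s then 1 else if s ≤ -α then -1 else 0

/-!
On the boundary `ψ t_l = B` the saturated sign equals `1`, so the derivative of `ψ t_l` is
`ψ² (j_l - ‖J‖ - γ) ≤ -ψ² γ < 0` because `|j_l| ≤ ‖J‖`; symmetrically it is positive on
`ψ t_l = -B`. A function that starts in `[-B, B]` and is pushed strictly inwards at both ends
of the interval never leaves it, by the fencing theorem for a barrier.
-/

theorem sgnα_of_le {α s : ℝ} (h : α ≤ s) : sgnα α s = 1 := if_pos h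

theorem sgnα_of_le_neg {α s : ℝ} (hα : 0 < α) (h : s ≤ -α) : sgnα α s = -1 := by
  rw [sgnα, if_neg (by linarith), if_pos h]

theorem le_of_hasDerivAt_of_deriv_neg_at_boundary {f f' : ℝ → ℝ} {t₀ B : ℝ}
    (hf : ∀ t, t₀ ≤ t → HasDerivAt f (f' t) t) (hbound : ∀ t, t₀ ≤ t → f t = B → f' t < 0)
    (h₀ : f t₀ ≤ B) : ∀ t, t₀ ≤ t → f t ≤ B := fun _ ht =>
  image_le_of_deriv_right_lt_deriv_boundary (B := fun _ => B) (B' := fun _ => 0)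
    (fun s hs => (hf s hs.1).continuousAt.continuousWithinAt)
    (fun s hs => (hf s hs.1).hasDerivWithinAt) h₀ (fun _ => hasDerivAt_const _ _)
    (fun s hs => hbound s hs.1) ⟨ht, le_rfl⟩

theorem abs_le_of_hasDerivAt_of_inward_at_boundary {f f' : ℝ → ℝ} {t₀ B : ℝ}
    (hf : ∀ t, t₀ ≤ t → HasDerivAt f (f' t) t)
    (hupper : ∀ t, t₀ ≤ t → f t = B → f' t < 0) (hlower : ∀ t, t₀ ≤ t → f t = -B → 0 < f' t)
    (h₀ : |f t₀| ≤ B) : ∀ t, t₀ ≤ t → |f t| ≤ B := by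
  intro t ht
  have hle := le_of_hasDerivAt_of_deriv_neg_at_boundary hf hupper (abs_le.mp h₀).2 t ht
  have hge := le_of_hasDerivAt_of_deriv_neg_at_boundary (f := fun s => -f s) (f' := fun s => -f' s)
    (fun s hs => (hf s hs).neg)
    (fun s hs hfs => neg_neg_of_pos (hlower s hs (neg_eq_iff_eq_neg.mp hfs)))
    (by linarith [(abs_le.mp h₀).1]) t ht
  exact abs_le.mpr ⟨by linarith, hle⟩

theorem projected_estimator_invariant_general (m : ℕ) (ψ γ B t₀ : ℝ)
    (hψ : ψ ≠ 0) (hγ : 0 < γ) (hB : 0 < B)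
    (J : ℝ → EuclideanSpace ℝ (Fin m))
    (T : ℝ → Fin m → ℝ)
    (hdyn : ∀ (l : Fin m) (t : ℝ), t₀ ≤ t →
      HasDerivAt (fun s => T s l)
        (ψ * (J t l - (‖J t‖ + γ) * sgnα B (ψ * T t l))) t)
    (hinit : ∀ l, |ψ * T t₀ l| ≤ B) :
    ∀ t, t₀ ≤ t → ∀ l, |ψ * T t l| ≤ B := by
  intro t ht l
  have hψ2 : 0 < ψ ^ 2 := by positivity
  have hcoord (s : ℝ) : |J s l| ≤ ‖J s‖ := PiLp.norm_apply_le (J s) l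
  refine abs_le_of_hasDerivAt_of_inward_at_boundary (fun s hs => (hdyn l s hs).const_mul ψ) ?_ ?_
    (hinit l) t ht
  · intro s _ hs
    rw [hs, sgnα_of_le le_rfl, ← mul_assoc, ← sq]
    exact mul_neg_of_pos_of_neg hψ2 (by linarith [(abs_le.mp (hcoord s)).2])
  · intro s _ hs
    rw [hs, sgnα_of_le_neg hB le_rfl, ← mul_assoc, ← sq]
    exact mul_pos hψ2 (by linarith [(abs_le.mp (hcoord s)).1])

/-- Forward invariance of the box `{|ψ t_l| ≤ B}` for the projected adaptive
parameter estimator dynamics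
`ṫ_l = ψ( j_l(t) − (‖J(t)‖ + γ)·sgn_B(ψ t_l(t)) )`. -/
theorem projected_estimator_invariant (m : ℕ) (ψ γ B t₀ : ℝ)
    (hψ : ψ ≠ 0) (hγ : 0 < γ) (hB : 0 < B)
    (J : ℝ → EuclideanSpace ℝ (Fin m)) (hJ : Continuous J)
    (T : ℝ → Fin m → ℝ)
    (hdyn : ∀ (l : Fin m) (t : ℝ), t₀ ≤ t →
      HasDerivAt (fun s => T s l)
        (ψ * (J t l - (‖J t‖ + γ) * sgnα B (ψ * T t l))) t)
    (hinit : ∀ l, |ψ * T t₀ l| ≤ B) :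
    ∀ t, t₀ ≤ t → ∀ l, |ψ * T t l| ≤ B :=
  projected_estimator_invariant_general m ψ γ B t₀ hψ hγ hB J T hdyn hinit
end
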